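/- Let $R = \hat{R}_0 = R_0[\zeta]$ where $R_0$ is a commutative ring and $\hat{R}_0$ is free as an $R_0$-module. Let $G$ be a finite group and $e \in R_0 G$ an idempotent. If $1 \in \hat{R}_0 G \cdot e \cdot \hat{R}_0 G$, then $1 \in R_0 G \cdot e \cdot R_0 G$; i.e., fullness of $e$ over the free extension $\hat{R}_0$ implies fullness over $R_0$. -/

import Mathlib

/-!
The coordinate `π := b.coord i₀ : Rh → R₀` of the basis vector `1` is an `R₀`-linear retraction
of `R₀ → Rh`; applied coefficientwise it gives an additive map `P : RhG → R₀G` with `P 1 = 1` and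
`P (r • x) = π r • x` for `x ∈ R₀G`. Since `RhG` is spanned over its central subring `Rh` by
`R₀G`, the two-sided ideal of `RhG` generated by `e` is contained in the `Rh`-span of the ideal
`I = R₀G e R₀G`, and `P` maps that span into `I`. Hence `1 = P 1 ∈ I`.
-/

/-- The ring homomorphism `R₀G → RG` on group algebras induced by a ring
homomorphism `R₀ → R` on coefficients. -/
noncomputable def groupAlgebraBaseChange {R₀ R : Type*} [CommRing R₀] [CommRing R]
    (f : R₀ →+* R) (G : Type*) [Group G] :
    MonoidAlgebra R₀ G →+* MonoidAlgebra R G :=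
  MonoidAlgebra.liftNCRingHom (MonoidAlgebra.singleOneRingHom.comp f)
    (MonoidAlgebra.of R G) (fun x y => by
      show MonoidAlgebra.single (1 : G) (f x) * MonoidAlgebra.single y 1 =
        MonoidAlgebra.single y 1 * MonoidAlgebra.single (1 : G) (f x)
      simp [MonoidAlgebra.single_mul_single])

theorem groupAlgebraBaseChange_eq_mapRingHom {R₀ R : Type*} [CommRing R₀] [CommRing R]
    (f : R₀ →+* R) (G : Type*) [Group G] :
    groupAlgebraBaseChange f G = MonoidAlgebra.mapRingHom G f := by
  ext <;> simp [groupAlgebraBaseChange, MonoidAlgebra.single_mul_single]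

namespace TwoSidedIdeal

variable {S A B : Type*} [CommRing S] [Ring A] [Ring B] [Algebra S B]

theorem coe_map_subset_span_image {F : A →+* B} (hF : Submodule.span S (Set.range F) = ⊤)
    (I : TwoSidedIdeal A) : (I.map F : Set B) ⊆ Submodule.span S (F '' I) := by
  set M := Submodule.span S (F '' I)
  have mem_top (x : B) : x ∈ Submodule.span S (Set.range F) := hF ▸ Submodule.mem_top
  have left_mul : Submodule.span S (Set.range F) * M ≤ M := by
    rw [Submodule.span_mul_span]
    refine Submodule.span_mono ?_
    rintro _ ⟨_, ⟨a, rfl⟩, _, ⟨i, hi, rfl⟩, rfl⟩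
    exact ⟨a * i, I.mul_mem_left _ _ hi, map_mul F a i⟩
  have right_mul : M * Submodule.span S (Set.range F) ≤ M := by
    rw [Submodule.span_mul_span]
    refine Submodule.span_mono ?_
    rintro _ ⟨_, ⟨i, hi, rfl⟩, _, ⟨a, rfl⟩, rfl⟩
    exact ⟨i * a, I.mul_mem_right _ _ hi, map_mul F i a⟩
  let K : TwoSidedIdeal B := .mk' M M.zero_mem M.add_mem M.neg_mem
    (fun hy ↦ left_mul (Submodule.mul_mem_mul (mem_top _) hy))
    (fun hx ↦ right_mul (Submodule.mul_mem_mul hx (mem_top _)))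
  have hK : I.map F ≤ K := span_le.mpr fun x hx ↦ (mem_mk' ..).mpr (Submodule.subset_span hx)
  exact fun x hx ↦ (mem_mk' ..).mp (hK hx)

end TwoSidedIdeal

namespace MonoidAlgebra

variable {R₀ R M : Type*} [CommRing R₀] [CommRing R] [Algebra R₀ R] [Monoid M]

theorem span_range_mapRingHom_algebraMap :
    Submodule.span R (Set.range (mapRingHom M (algebraMap R₀ R))) = ⊤ := by
  refine Submodule.eq_top_iff'.mpr fun x ↦ ?_
  induction x using MonoidAlgebra.induction_linear with
  | zero => exact Submodule.zero_mem _
  | add x y hx hy => exact Submodule.add_mem _ hx hy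
  | single m r =>
    have hsingle : single m r = r • mapRingHom M (algebraMap R₀ R) (single m 1) := by simp
    exact hsingle ▸ Submodule.smul_mem _ r (Submodule.subset_span ⟨_, rfl⟩)

theorem map_smul_mapRingHom_algebraMap (π : R →ₗ[R₀] R₀) (r : R) (x : MonoidAlgebra R₀ M) :
    map π.toAddMonoidHom (r • mapRingHom M (algebraMap R₀ R) x) = π r • x := by
  ext m
  have hcoeff : r * algebraMap R₀ R (x.coeff m) = x.coeff m • r := by
    rw [Algebra.smul_def, mul_comm]
  simp [hcoeff, mul_comm]

theorem map_mem_of_mem_span_image (π : R →ₗ[R₀] R₀) {I : TwoSidedIdeal (MonoidAlgebra R₀ M)}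
    {x : MonoidAlgebra R M} (hx : x ∈ Submodule.span R (mapRingHom M (algebraMap R₀ R) '' I)) :
    map π.toAddMonoidHom x ∈ I := by
  suffices ∀ r : R, map π.toAddMonoidHom (r • x) ∈ I by simpa using this 1
  induction hx using Submodule.span_induction with
  | mem _ hy =>
    obtain ⟨y, hy, rfl⟩ := hy
    intro r
    rw [map_smul_mapRingHom_algebraMap, Algebra.smul_def]
    exact I.mul_mem_left _ _ hy
  | zero => simp
  | add y z _ _ hy hz =>
    intro r
    rw [smul_add, MonoidAlgebra.map_add]
    exact I.add_mem (hy r) (hz r)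
  | smul s y _ hy => intro r; rw [smul_smul]; exact hy (r * s)

theorem span_eq_top_of_span_image_mapRingHom_eq_top (π : R →ₗ[R₀] R₀) (hπ : π 1 = 1)
    {s : Set (MonoidAlgebra R₀ M)}
    (hs : TwoSidedIdeal.span (mapRingHom M (algebraMap R₀ R) '' s) = ⊤) :
    TwoSidedIdeal.span s = ⊤ := by
  set F := mapRingHom M (algebraMap R₀ R)
  set I := TwoSidedIdeal.span s
  have h1 : (1 : MonoidAlgebra R M) ∈ Submodule.span R (F '' I) := by
    refine TwoSidedIdeal.coe_map_subset_span_image span_range_mapRingHom_algebraMap I ?_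
    have hspan : TwoSidedIdeal.span (F '' s) ≤ I.map F :=
      TwoSidedIdeal.span_mono (Set.image_mono TwoSidedIdeal.subset_span)
    exact hspan (hs ▸ TwoSidedIdeal.one_mem_iff _ |>.mpr rfl)
  have hP1 : map π.toAddMonoidHom (1 : MonoidAlgebra R M) = 1 := by simp [one_def, hπ]
  rw [← TwoSidedIdeal.one_mem_iff, ← hP1]
  exact map_mem_of_mem_span_image π h1

end MonoidAlgebra

theorem full_descends_along_free_extension_general {R₀ Rh G : Type*} [CommRing R₀] [CommRing Rh]
    [Algebra R₀ Rh] [Group G]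
    {ι : Type*} (b : Module.Basis ι R₀ Rh) (i₀ : ι) (hb : b i₀ = 1)
    (e : MonoidAlgebra R₀ G)
    (hfull : TwoSidedIdeal.span {groupAlgebraBaseChange (algebraMap R₀ Rh) G e} =
      (⊤ : TwoSidedIdeal (MonoidAlgebra Rh G))) :
    TwoSidedIdeal.span {e} = (⊤ : TwoSidedIdeal (MonoidAlgebra R₀ G)) := by
  rw [groupAlgebraBaseChange_eq_mapRingHom, ← Set.image_singleton] at hfull
  exact MonoidAlgebra.span_eq_top_of_span_image_mapRingHom_eq_top (b.coord i₀) (by simp [← hb])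
    hfull

/-- let `Rh₀` be a commutative `R₀`-algebra which is free as an
`R₀`-module, with a basis containing `1`.  If an idempotent `e ∈ R₀G` becomes full
in `Rh₀G` (i.e. `1 ∈ Rh₀G · e · Rh₀G`), then `e` is already full in `R₀G`
(i.e. `1 ∈ R₀G · e · R₀G`). -/
theorem full_descends_along_free_extension {R₀ Rh G : Type*} [CommRing R₀] [CommRing Rh]
    [Algebra R₀ Rh] [Group G] [Fintype G]
    {ι : Type*} (b : Module.Basis ι R₀ Rh) (i₀ : ι) (hb : b i₀ = 1)
    (e : MonoidAlgebra R₀ G) (he : IsIdempotentElem e)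
    (hfull : TwoSidedIdeal.span {groupAlgebraBaseChange (algebraMap R₀ Rh) G e} =
      (⊤ : TwoSidedIdeal (MonoidAlgebra Rh G))) :
    TwoSidedIdeal.span {e} = (⊤ : TwoSidedIdeal (MonoidAlgebra R₀ G)) :=
  full_descends_along_free_extension_general b i₀ hb e hfull
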